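/- Let m > n ≥ 1 and let F be an m×m unitary complex matrix, partitioned into row blocks F = [G ; H] where G is n×m and H is (m−n)×m (so that G G^† = I_n, H H^† = I_{m−n}, and G H^† = 0). Then for every n×(m−n) complex matrix M, the spectral norm satisfies ‖M^† G − H‖₂² = 1 + ‖M‖₂². -/

import Mathlib

open Matrix

noncomputable section

/-- Euclidean (`ℓ²`) norm of a complex vector. -/
def l2norm {ι : Type*} [Fintype ι] (v : ι → ℂ) : ℝ := Real.sqrt (∑ i, ‖v i‖ ^ 2)

/-- Spectral norm (largest singular value) of a complex matrix: the supremum of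
`‖M v‖₂` over the `ℓ²` unit ball. -/
def specNorm {ι κ : Type*} [Fintype ι] [Fintype κ] (M : Matrix ι κ ℂ) : ℝ :=
  sSup {c : ℝ | ∃ v : κ → ℂ, l2norm v ≤ 1 ∧ c = l2norm (M *ᵥ v)}

/-!
Write `G` and `H` for the row blocks of `F`. Orthonormality of the rows of `F` gives
`(MᴴG - H)(MᴴG - H)ᴴ = MᴴM + 1`, so by the C⋆-identity `‖MᴴG - H‖² = ‖MᴴM + 1‖`.
As `MᴴM ≥ 0`, its norm `‖M‖²` is a point of its spectrum, hence `‖M‖² + 1` is a point of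
the spectrum of `MᴴM + 1`, and `‖MᴴM + 1‖ = ‖M‖² + 1`.
-/

open scoped Matrix.Norms.L2Operator MatrixOrder ComplexOrder

lemma l2norm_eq_norm_toLp {ι : Type*} [Fintype ι] (v : ι → ℂ) :
    l2norm v = ‖WithLp.toLp 2 v‖ := by
  rw [EuclideanSpace.norm_eq]; rfl

lemma specNorm_eq_l2_opNorm {ι κ : Type*} [Fintype ι] [Fintype κ] [DecidableEq κ]
    (M : Matrix ι κ ℂ) : specNorm M = ‖M‖ := by
  rw [l2_opNorm_def, ← ContinuousLinearMap.sSup_unitClosedBall_eq_norm, specNorm]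
  congr 1
  ext c
  simp only [Set.mem_image, Set.mem_ofPred_eq, Metric.mem_closedBall, dist_zero_right,
    l2norm_eq_norm_toLp]
  constructor
  · rintro ⟨v, hv, rfl⟩
    exact ⟨WithLp.toLp 2 v, hv, rfl⟩
  · rintro ⟨x, hx, rfl⟩
    exact ⟨x.ofLp, hx, rfl⟩

lemma CStarAlgebra.norm_add_one_of_nonneg {A : Type*} [CStarAlgebra A] [PartialOrder A]
    [StarOrderedRing A] [Nontrivial A] {a : A} (ha : 0 ≤ a) : ‖a + 1‖ = ‖a‖ + 1 := by
  refine le_antisymm ((norm_add_le a 1).trans_eq (by rw [CStarRing.norm_one])) ?_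
  have hmem : ‖a‖ + 1 ∈ spectrum ℝ (a + 1) := by
    rw [add_comm a, ← map_one (algebraMap ℝ A)]
    exact spectrum.add_mem_add_iff.mpr (norm_mem_spectrum_of_nonneg ha)
  simpa [abs_of_nonneg (by positivity : 0 ≤ ‖a‖ + 1)] using spectrum.norm_le_norm_of_mem hmem

namespace Matrix

lemma l2_opNorm_conjTranspose_mul_self_add_one {ι κ : Type*} [Fintype ι] [Fintype κ]
    [DecidableEq κ] [Nonempty κ] (M : Matrix ι κ ℂ) : ‖Mᴴ * M + 1‖ = ‖M‖ ^ 2 + 1 := by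
  rw [CStarAlgebra.norm_add_one_of_nonneg (posSemidef_conjTranspose_mul_self M).nonneg,
    l2_opNorm_conjTranspose_mul_self, sq]

lemma l2_opNorm_sq_eq_norm_mul_conjTranspose {ι κ : Type*} [Fintype ι] [Fintype κ]
    [DecidableEq ι] [DecidableEq κ] (B : Matrix ι κ ℂ) : ‖B‖ ^ 2 = ‖B * Bᴴ‖ := by
  rw [← l2_opNorm_conjTranspose B, sq, ← l2_opNorm_conjTranspose_mul_self,
    conjTranspose_conjTranspose]

lemma submatrix_mul_conjTranspose_self {ι κ ν μ R : Type*} [Fintype μ] [Semiring R]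
    [StarRing R] (F : Matrix ι μ R) (r : κ → ι) (s : ν → ι) :
    (F * Fᴴ).submatrix r s = F.submatrix r id * (F.submatrix s id)ᴴ := by
  rw [submatrix_mul _ _ _ id _ Function.bijective_id, conjTranspose_submatrix]

lemma sub_mul_conjTranspose_self_of_orthonormal {ι κ μ R : Type*} [Fintype ι] [Fintype κ]
    [Fintype μ] [DecidableEq ι] [DecidableEq κ] [CommRing R] [StarRing R]
    {G : Matrix ι μ R} {H : Matrix κ μ R}
    (hGG : G * Gᴴ = 1) (hGH : G * Hᴴ = 0) (hHH : H * Hᴴ = 1) (M : Matrix ι κ R) :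
    (Mᴴ * G - H) * (Mᴴ * G - H)ᴴ = Mᴴ * M + 1 := by
  have hHG : H * Gᴴ = 0 := by
    simpa only [conjTranspose_mul, conjTranspose_conjTranspose, conjTranspose_zero]
      using congrArg conjTranspose hGH
  rw [conjTranspose_sub, conjTranspose_mul, conjTranspose_conjTranspose, Matrix.sub_mul,
    Matrix.mul_sub, Matrix.mul_sub, Matrix.mul_assoc, ← Matrix.mul_assoc G, hGG,
    Matrix.one_mul, Matrix.mul_assoc, hGH, Matrix.mul_zero, ← Matrix.mul_assoc H, hHG,
    Matrix.zero_mul, hHH, sub_zero, zero_sub, sub_neg_eq_add]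

end Matrix

theorem stmt_13_general (m n q : ℕ) (hm : n < m) (hq : q = m - n)
    (F : Matrix (Fin n ⊕ Fin q) (Fin m) ℂ)
    (hF1 : F * Fᴴ = 1)
    (M : Matrix (Fin n) (Fin q) ℂ) :
    specNorm (Mᴴ * F.submatrix Sum.inl id - F.submatrix Sum.inr id) ^ 2
      = 1 + specNorm M ^ 2 := by
  have : Nonempty (Fin q) := ⟨⟨0, by omega⟩⟩
  have hGG : F.submatrix Sum.inl id * (F.submatrix Sum.inl id)ᴴ = 1 := by
    rw [← submatrix_mul_conjTranspose_self, hF1, submatrix_one _ Sum.inl_injective]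
  have hHH : F.submatrix Sum.inr id * (F.submatrix Sum.inr id)ᴴ = 1 := by
    rw [← submatrix_mul_conjTranspose_self, hF1, submatrix_one _ Sum.inr_injective]
  have hGH : F.submatrix Sum.inl id * (F.submatrix Sum.inr id)ᴴ = 0 := by
    rw [← submatrix_mul_conjTranspose_self, hF1]
    ext
    simp [one_apply]
  rw [specNorm_eq_l2_opNorm, specNorm_eq_l2_opNorm, l2_opNorm_sq_eq_norm_mul_conjTranspose,
    sub_mul_conjTranspose_self_of_orthonormal hGG hGH hHH,
    l2_opNorm_conjTranspose_mul_self_add_one, add_comm]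

/-- if the `m×m` matrix `F = [G ; H]` is unitary with row blocks `G` (`n×m`)
and `H` (`(m−n)×m`), then for every `n×(m−n)` matrix `M`,
`‖M†G − H‖₂² = 1 + ‖M‖₂²`. -/
theorem stmt_13 (m n q : ℕ) (hn : 1 ≤ n) (hm : n < m) (hq : q = m - n)
    (F : Matrix (Fin n ⊕ Fin q) (Fin m) ℂ)
    (hF1 : F * Fᴴ = 1) (hF2 : Fᴴ * F = 1)
    (M : Matrix (Fin n) (Fin q) ℂ) :
    specNorm (Mᴴ * F.submatrix Sum.inl id - F.submatrix Sum.inr id) ^ 2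
      = 1 + specNorm M ^ 2 :=
  stmt_13_general m n q hm hq F hF1 M

end
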